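/- Let H be an n×n symmetric positive definite matrix and let X = (X_t)_{t∈ℤ} be an n-dimensional strictly stationary process. Then there exists a process G ∈ 𝒢_H such that Δ_t X = (e^{−H} − I) X_{t−1} + Δ_t G for all t ∈ ℤ, and moreover e^{tH} X_t → 0 in probability as t → −∞. Equivalently, X admits the AR(1)-type representation X_t − Φ X_{t−1} = Δ_t G with Φ = e^{−H}. -/

import Mathlib

/-!
The noise is forced on us: `G_0 = 0` and `Δ_t G = X_t − e^{−H} X_{t−1}`, so `G` is the discrete
antiderivative of these innovations. The increment `G_{t+s} − G_s` is one fixed measurable function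
of the finitely many variables `X_{s+k}`, `|k| ≤ |t| + 1`, so stationarity of `X` makes the
increments of `G` stationary. The weighted increments telescope,
`e^{kH} Δ_k G = e^{kH} X_k − e^{(k−1)H} X_{k−1}`,
so the partial sums are `X_0 − e^{(l−1)H} X_{l−1}`. Finally `e^{tH} → 0` as `t → −∞` because `H`
has positive eigenvalues, while every `X_t` has the law of `X_0`, which is tight; hence
`e^{tH} X_t → 0` in probability and the partial sums tend to `X_0`.
-/

set_option autoImplicit false

open MeasureTheory Filter Finset Matrix Topology

variable {Ω : Type*}

/-- Two `ℤ`-indexed `ℝⁿ`-valued processes have the same finite-dimensional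
distributions. -/
def SameFDD {n : ℕ} [MeasurableSpace Ω] (μ : Measure Ω)
    (X Y : ℤ → Ω → (Fin n → ℝ)) : Prop :=
  ∀ (m : ℕ) (t : Fin m → ℤ),
    μ.map (fun ω (i : Fin m) => X (t i) ω) = μ.map (fun ω (i : Fin m) => Y (t i) ω)

/-- Strict stationarity of a `ℤ`-indexed process. -/
def IsStationaryProcess {n : ℕ} [MeasurableSpace Ω] (μ : Measure Ω)
    (X : ℤ → Ω → (Fin n → ℝ)) : Prop :=
  ∀ s : ℤ, SameFDD μ (fun t => X (t + s)) X

/-- Stationarity of increments of a `ℤ`-indexed process. -/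
def HasStationaryIncrements {n : ℕ} [MeasurableSpace Ω] (μ : Measure Ω)
    (G : ℤ → Ω → (Fin n → ℝ)) : Prop :=
  ∀ s : ℤ, SameFDD μ (fun t ω => G (t + s) ω - G s ω) (fun t ω => G t ω - G 0 ω)

/-- The matrix exponential `e^{tH}` for an integer `t`. -/
noncomputable def zexp {n : ℕ} (H : Matrix (Fin n) (Fin n) ℝ) (t : ℤ) :
    Matrix (Fin n) (Fin n) ℝ :=
  NormedSpace.exp ((t : ℝ) • H)

/-- The partial sum `Σ_{k=l}^0 e^{kH} Δ_k G`. -/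
noncomputable def partialSumG {n : ℕ} (H : Matrix (Fin n) (Fin n) ℝ)
    (G : ℤ → Ω → (Fin n → ℝ)) (l : ℤ) (ω : Ω) : Fin n → ℝ :=
  ∑ k ∈ Finset.Icc l 0, (zexp H k).mulVec (G k ω - G (k - 1) ω)

/-- `G ∈ 𝒢_H` : `G` is a stationary-increment process starting from `0` whose partial
sums `Σ_{k=l}^0 e^{kH} Δ_k G` converge in probability as `l → −∞`. -/
def MemG {n : ℕ} [MeasurableSpace Ω] (μ : Measure Ω) (H : Matrix (Fin n) (Fin n) ℝ)
    (G : ℤ → Ω → (Fin n → ℝ)) : Prop :=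
  (∀ ω, G 0 ω = 0) ∧ HasStationaryIncrements μ G ∧
    ∃ ξ : Ω → (Fin n → ℝ), TendstoInMeasure μ (fun l => partialSumG H G l) Filter.atBot ξ

section Cumsum

variable {M : Type*} [AddCommGroup M]

/-- The discrete antiderivative of `f : ℤ → M` vanishing at `0`. -/
noncomputable def cumsum (f : ℤ → M) (t : ℤ) : M :=
  ∑ k ∈ Ioc 0 t, f k - ∑ k ∈ Ioc t 0, f k

@[simp]
lemma cumsum_zero (f : ℤ → M) : cumsum f 0 = 0 := by
  simp [cumsum]

lemma cumsum_of_nonpos (f : ℤ → M) {t : ℤ} (ht : t ≤ 0) :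
    cumsum f t = -∑ k ∈ Ioc t 0, f k := by
  simp [cumsum, Ioc_eq_empty_of_le ht]

lemma cumsum_sub_cumsum_sub_one (f : ℤ → M) (t : ℤ) :
    cumsum f t - cumsum f (t - 1) = f t := by
  rcases le_or_gt t 0 with ht | ht
  · have hIoc : Ioc (t - 1) 0 = insert t (Ioc t 0) := by
      ext k; simp only [mem_Ioc, mem_insert]; omega
    rw [cumsum_of_nonpos f ht, cumsum_of_nonpos f (by omega), hIoc,
      sum_insert (by simp)]
    abel
  · have hIoc : Ioc 0 t = insert t (Ioc 0 (t - 1)) := by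
      ext k; simp only [mem_Ioc, mem_insert]; omega
    simp only [cumsum, Ioc_eq_empty_of_le ht.le, Ioc_eq_empty_of_le (by omega : 0 ≤ t - 1),
      hIoc, sum_insert (by simp : t ∉ Ioc 0 (t - 1))]
    abel

lemma eq_of_sub_sub_one_eq {F F' : ℤ → M} (h₀ : F 0 = F' 0)
    (h : ∀ t, F t - F (t - 1) = F' t - F' (t - 1)) : F = F' := by
  funext t
  induction t using Int.induction_on with
  | zero => exact h₀
  | succ k ih =>
    have hk := h (k + 1)
    rw [add_sub_cancel_right, ih] at hk
    exact sub_left_injective hk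
  | pred k ih =>
    have hk := h (-k)
    rw [ih] at hk
    exact sub_right_injective hk

lemma cumsum_add_sub_cumsum (f : ℤ → M) (s t : ℤ) :
    cumsum f (t + s) - cumsum f s = cumsum (fun k => f (k + s)) t := by
  revert t
  rw [← funext_iff]
  refine eq_of_sub_sub_one_eq (by simp) fun t => ?_
  rw [sub_sub_sub_cancel_right, cumsum_sub_cumsum_sub_one, sub_add_eq_add_sub,
    cumsum_sub_cumsum_sub_one]

lemma cumsum_sub_sub_one (F : ℤ → M) :
    cumsum (fun k => F k - F (k - 1)) = fun t => F t - F 0 :=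
  eq_of_sub_sub_one_eq (by simp) fun t => by
    rw [cumsum_sub_cumsum_sub_one, sub_sub_sub_cancel_right]

lemma sum_Icc_sub_sub_one (F : ℤ → M) {l : ℤ} (hl : l ≤ 1) :
    ∑ k ∈ Icc l 0, (F k - F (k - 1)) = F 0 - F (l - 1) := by
  have hIcc : Icc l 0 = Ioc (l - 1) 0 := by ext k; simp only [mem_Icc, mem_Ioc]; omega
  rw [hIcc, ← neg_neg (∑ k ∈ _, _), ← cumsum_of_nonpos _ (by omega), cumsum_sub_sub_one,
    neg_sub]

end Cumsum

section Noise

variable {n : ℕ}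

/-- The noise `G` of the recursion `x_t = Φ x_{t-1} + Δ_t G` along a path `x`, with `G_0 = 0`. -/
noncomputable def arNoise (Φ : Matrix (Fin n) (Fin n) ℝ) (x : ℤ → Fin n → ℝ) : ℤ → Fin n → ℝ :=
  cumsum fun k => x k - Φ *ᵥ x (k - 1)

variable (Φ : Matrix (Fin n) (Fin n) ℝ)

@[simp]
lemma arNoise_zero (x : ℤ → Fin n → ℝ) : arNoise Φ x 0 = 0 :=
  cumsum_zero _

lemma arNoise_sub_arNoise_sub_one (x : ℤ → Fin n → ℝ) (t : ℤ) :
    arNoise Φ x t - arNoise Φ x (t - 1) = x t - Φ *ᵥ x (t - 1) :=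
  cumsum_sub_cumsum_sub_one _ t

lemma arNoise_add_sub_arNoise (x : ℤ → Fin n → ℝ) (s t : ℤ) :
    arNoise Φ x (t + s) - arNoise Φ x s = arNoise Φ (fun k => x (k + s)) t := by
  simp only [arNoise, cumsum_add_sub_cumsum, sub_add_eq_add_sub]

lemma continuous_arNoise (t : ℤ) : Continuous fun x : ℤ → Fin n → ℝ => arNoise Φ x t := by
  unfold arNoise cumsum
  fun_prop

lemma dependsOn_arNoise {t T : ℤ} (ht : |t| ≤ T) :
    DependsOn (fun x => arNoise Φ x t) ↑(Icc (-T - 1) T) := by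
  obtain ⟨htl, htu⟩ := abs_le.mp ht
  intro x y hxy
  have hwindow : ∀ k, -T ≤ k → k ≤ T → x k - Φ *ᵥ x (k - 1) = y k - Φ *ᵥ y (k - 1) := by
    intro k hk₁ hk₂
    rw [hxy k (by rw [coe_Icc]; constructor <;> omega),
      hxy (k - 1) (by rw [coe_Icc]; constructor <;> omega)]
  simp only [arNoise, cumsum]
  congr 1 <;> apply sum_congr rfl <;> intro k hk <;> rw [mem_Ioc] at hk <;>
    exact hwindow k (by omega) (by omega)

end Noise

section FiniteDimensionalDistributions

variable {n : ℕ} [MeasurableSpace Ω] {μ : Measure Ω} {X Y : ℤ → Ω → (Fin n → ℝ)}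

lemma SameFDD.map_restrict_eq (h : SameFDD μ Y X) (hY : ∀ t, Measurable (Y t))
    (hX : ∀ t, Measurable (X t)) (S : Finset ℤ) :
    μ.map (fun ω (k : S) => Y k ω) = μ.map (fun ω (k : S) => X k ω) := by
  let e := S.equivFin
  have hreindex : Measurable fun (v : Fin S.card → Fin n → ℝ) (k : S) => v (e k) :=
    measurable_pi_lambda _ fun _ => measurable_pi_apply _
  have hfactor : ∀ Z : ℤ → Ω → (Fin n → ℝ), (fun ω (k : S) => Z k ω) =
      (fun v (k : S) => v (e k)) ∘ fun ω i => Z (e.symm i) ω := by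
    intro Z
    funext ω k
    simp
  rw [hfactor Y, hfactor X, ← Measure.map_map hreindex (measurable_pi_lambda _ fun _ => hY _),
    ← Measure.map_map hreindex (measurable_pi_lambda _ fun _ => hX _), h]

lemma SameFDD.map_eq_of_dependsOn (h : SameFDD μ Y X) (hY : ∀ t, Measurable (Y t))
    (hX : ∀ t, Measurable (X t)) {β : Type*} [MeasurableSpace β]
    {F : (ℤ → Fin n → ℝ) → β} (hF : Measurable F) {S : Finset ℤ} (hFS : DependsOn F S) :
    μ.map (fun ω => F fun k => Y k ω) = μ.map (fun ω => F fun k => X k ω) := by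
  classical
  let F' := fun v : (k : S) → Fin n → ℝ => F (Function.updateFinset 0 S v)
  have hF' : Measurable F' := hF.comp measurable_updateFinset
  have hfactor : ∀ Z : ℤ → Ω → (Fin n → ℝ), (fun ω => F fun k => Z k ω) =
      F' ∘ fun ω (k : S) => Z k ω := by
    intro Z
    funext ω
    exact hFS fun k hk => by simp [Function.updateFinset, Finset.mem_coe.mp hk]
  rw [hfactor Y, hfactor X, ← Measure.map_map hF' (measurable_pi_lambda _ fun _ => hY _),
    ← Measure.map_map hF' (measurable_pi_lambda _ fun _ => hX _), h.map_restrict_eq hY hX]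

lemma IsStationaryProcess.map_eq (hX : IsStationaryProcess μ X) (hmX : ∀ t, Measurable (X t))
    (t : ℤ) : μ.map (X t) = μ.map (X 0) := by
  simpa using (hX t).map_eq_of_dependsOn (fun _ => hmX _) hmX (measurable_pi_apply 0)
    (S := {0}) fun x y hxy => hxy 0 (by simp)

lemma IsStationaryProcess.hasStationaryIncrements_arNoise (hX : IsStationaryProcess μ X)
    (hmX : ∀ t, Measurable (X t)) (Φ : Matrix (Fin n) (Fin n) ℝ) :
    HasStationaryIncrements μ fun t ω => arNoise Φ (fun k => X k ω) t := by
  intro s m t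
  set T := ∑ i, |t i|
  have hT : ∀ i, |t i| ≤ T := fun i => single_le_sum (fun j _ => abs_nonneg (t j)) (mem_univ i)
  have hF : Measurable fun (x : ℤ → Fin n → ℝ) i => arNoise Φ x (t i) :=
    (continuous_pi fun i => continuous_arNoise Φ (t i)).measurable
  simp only [arNoise_add_sub_arNoise, arNoise_zero, sub_zero]
  exact (hX s).map_eq_of_dependsOn (fun _ => hmX _) hmX hF
    fun x y hxy => funext fun i => dependsOn_arNoise Φ (hT i) hxy

end FiniteDimensionalDistributions

section Convergence

lemma exists_measure_norm_gt_le {E : Type*} [NormedAddCommGroup E] [MeasurableSpace E]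
    [BorelSpace E] [SecondCountableTopology E] [CompleteSpace E] (ν : Measure E)
    [IsFiniteMeasure ν] {δ : ENNReal} (hδ : 0 < δ) : ∃ r, ν {x | r < ‖x‖} ≤ δ := by
  have htight := tendsto_measure_norm_gt_of_isTightMeasureSet (isTightMeasureSet_singleton (μ := ν))
  simp only [_root_.iSup_singleton] at htight
  exact (ENNReal.tendsto_nhds_zero.mp htight δ hδ).exists

lemma tendstoInMeasure_mulVec_of_tendsto_zero {m p ι : Type*} [Fintype m] [Fintype p]
    [MeasurableSpace Ω] {μ : Measure Ω} {l : Filter ι} {A : ι → Matrix m p ℝ}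
    (hA : Tendsto A l (𝓝 0)) {X : ι → Ω → p → ℝ} (hX : ∀ i, AEMeasurable (X i) μ)
    {ν : Measure (p → ℝ)} [IsFiniteMeasure ν] (hXν : ∀ i, μ.map (X i) = ν) :
    TendstoInMeasure μ (fun i ω => A i *ᵥ X i ω) l fun _ => 0 := by
  let := Matrix.linftyOpNormedAddCommGroup (m := m) (n := p) (α := ℝ)
  rw [tendstoInMeasure_iff_norm]
  intro ε hε
  rw [ENNReal.tendsto_nhds_zero]
  intro δ hδ
  obtain ⟨r, hr⟩ := exists_measure_norm_gt_le ν hδ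
  have hsmall : ∀ᶠ i in l, ‖A i‖ * r < ε := by
    have : Tendsto (fun i => ‖A i‖ * r) l (𝓝 0) := by simpa using hA.norm.mul_const r
    exact this.eventually (gt_mem_nhds hε)
  filter_upwards [hsmall] with i hi
  have hsub : {ω | ε ≤ ‖A i *ᵥ X i ω - 0‖} ⊆ X i ⁻¹' {v | r < ‖v‖} := by
    intro ω hω
    by_contra hle
    simp only [Set.mem_ofPred_eq, Set.mem_preimage, not_lt, sub_zero] at hω hle
    have := linfty_opNorm_mulVec (A i) (X i ω)
    nlinarith [norm_nonneg (A i)]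
  calc μ {ω | ε ≤ ‖A i *ᵥ X i ω - 0‖} ≤ μ (X i ⁻¹' {v | r < ‖v‖}) := measure_mono hsub
    _ = ν {v | r < ‖v‖} := by
      rw [← hXν i, Measure.map_apply_of_aemeasurable (hX i)
        (measurableSet_lt measurable_const measurable_norm)]
    _ ≤ δ := hr

lemma MeasureTheory.TendstoInMeasure.const_sub {ι E : Type*} [SeminormedAddCommGroup E]
    [MeasurableSpace Ω] {μ : Measure Ω} {l : Filter ι} {f : ι → Ω → E}
    (hf : TendstoInMeasure μ f l fun _ => 0) (g : Ω → E) :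
    TendstoInMeasure μ (fun i ω => g ω - f i ω) l g := by
  rw [tendstoInMeasure_iff_norm] at hf ⊢
  simpa only [sub_sub_cancel_left, norm_neg, sub_zero] using hf

end Convergence

section MatrixExp

lemma Matrix.IsHermitian.exp_smul_eq {m : Type*} [Fintype m] [DecidableEq m]
    {A : Matrix m m ℝ} (hA : A.IsHermitian) (c : ℝ) :
    NormedSpace.exp (c • A) = (hA.eigenvectorUnitary : Matrix m m ℝ) *
      diagonal (fun i => Real.exp (c * hA.eigenvalues i)) *
        star (hA.eigenvectorUnitary : Matrix m m ℝ) := by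
  let U : (Matrix m m ℝ)ˣ := Unitary.toUnits hA.eigenvectorUnitary
  have hconj : c • A = U * diagonal (c • hA.eigenvalues) * (↑U⁻¹ : Matrix m m ℝ) := by
    conv_lhs => rw [hA.spectral_theorem]
    simp [U, Unitary.conjStarAlgAut_apply, diagonal_smul]
  rw [hconj, Matrix.exp_units_conj, Matrix.exp_diagonal]
  simp [U, Pi.exp_def, ← Real.exp_eq_exp_ℝ]

lemma Matrix.PosDef.tendsto_exp_smul_atBot {m : Type*} [Fintype m] [DecidableEq m]
    {A : Matrix m m ℝ} (hA : A.PosDef) :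
    Tendsto (fun c : ℝ => NormedSpace.exp (c • A)) atBot (𝓝 0) := by
  set U := (hA.isHermitian.eigenvectorUnitary : Matrix m m ℝ)
  have hdiag : Tendsto (fun c : ℝ => fun i => Real.exp (c * hA.isHermitian.eigenvalues i))
      atBot (𝓝 0) := tendsto_pi_nhds.mpr fun i =>
    Real.tendsto_exp_atBot.comp (tendsto_id.atBot_mul_const (hA.eigenvalues_pos i))
  have hconj : Continuous fun w : m → ℝ => U * diagonal w * star U := by fun_prop
  simpa [Function.comp_def, hA.isHermitian.exp_smul_eq] using (hconj.tendsto 0).comp hdiag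

end MatrixExp

section Zexp

variable {n : ℕ} (H : Matrix (Fin n) (Fin n) ℝ)

@[simp]
lemma zexp_zero : zexp H 0 = 1 := by
  simp [zexp]

lemma zexp_mul_exp_neg (k : ℤ) : zexp H k * NormedSpace.exp (-H) = zexp H (k - 1) := by
  have hcomm : Commute ((k : ℝ) • H) (-H) := ((Commute.refl H).neg_right).smul_left _
  rw [zexp, zexp, ← Matrix.exp_add_of_commute _ _ hcomm, Int.cast_sub, Int.cast_one, sub_smul,
    one_smul, sub_eq_add_neg]

lemma Matrix.PosDef.tendsto_zexp_atBot {H : Matrix (Fin n) (Fin n) ℝ} (hH : H.PosDef) :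
    Tendsto (zexp H) atBot (𝓝 0) :=
  hH.tendsto_exp_smul_atBot.comp (tendsto_intCast_atBot_iff.mpr tendsto_id)

lemma partialSumG_arNoise (X : ℤ → Ω → Fin n → ℝ) {l : ℤ} (hl : l ≤ 1) (ω : Ω) :
    partialSumG H (fun t ω => arNoise (NormedSpace.exp (-H)) (fun k => X k ω) t) l ω =
      X 0 ω - zexp H (l - 1) *ᵥ X (l - 1) ω := by
  have hterm : ∀ k, zexp H k *ᵥ (arNoise (NormedSpace.exp (-H)) (fun j => X j ω) k -
      arNoise (NormedSpace.exp (-H)) (fun j => X j ω) (k - 1)) =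
      zexp H k *ᵥ X k ω - zexp H (k - 1) *ᵥ X (k - 1) ω := fun k => by
    rw [arNoise_sub_arNoise_sub_one, mulVec_sub, mulVec_mulVec, zexp_mul_exp_neg]
  simp only [partialSumG, hterm]
  rw [sum_Icc_sub_sub_one (fun k => zexp H k *ᵥ X k ω) hl, zexp_zero, one_mulVec]

end Zexp

/-- every strictly stationary process `X` admits, for any symmetric
positive definite `H`, a representation `Δ_t X = (e^{−H} − I) X_{t−1} + Δ_t G`,
i.e. `X_t − e^{−H} X_{t−1} = Δ_t G`, with a noise `G ∈ 𝒢_H`; moreover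
`e^{tH} X_t → 0` in probability as `t → −∞`. -/
theorem stmt5 {n : ℕ} [MeasurableSpace Ω] (μ : Measure Ω) [IsProbabilityMeasure μ]
    (H : Matrix (Fin n) (Fin n) ℝ) (hH : H.PosDef)
    (X : ℤ → Ω → (Fin n → ℝ)) (hmX : ∀ t, Measurable (X t))
    (hX : IsStationaryProcess μ X) :
    (∃ G : ℤ → Ω → (Fin n → ℝ), (∀ t, Measurable (G t)) ∧ MemG μ H G ∧
      ∀ (t : ℤ) (ω : Ω), X t ω - X (t - 1) ω =
        (NormedSpace.exp (-H) - 1).mulVec (X (t - 1) ω) + (G t ω - G (t - 1) ω)) ∧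
      TendstoInMeasure μ (fun t ω => (zexp H t).mulVec (X t ω)) Filter.atBot
        (fun _ => (0 : Fin n → ℝ)) := by
  set Φ := NormedSpace.exp (-H)
  have hlim : TendstoInMeasure μ (fun t ω => zexp H t *ᵥ X t ω) atBot fun _ => 0 :=
    tendstoInMeasure_mulVec_of_tendsto_zero hH.tendsto_zexp_atBot
      (fun t => (hmX t).aemeasurable) (hX.map_eq hmX)
  have hpartial : TendstoInMeasure μ
      (partialSumG H fun t ω => arNoise Φ (fun k => X k ω) t) atBot (X 0) := by
    have hpred : Tendsto (fun l : ℤ => l - 1) atBot atBot :=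
      tendsto_atBot_add_const_right _ (-1) tendsto_id
    refine ((hlim.comp hpred).const_sub (X 0)).congr' ?_ EventuallyEq.rfl
    filter_upwards [eventually_le_atBot 0] with l hl
    exact .of_eq (funext (partialSumG_arNoise H X (by omega))).symm
  refine ⟨⟨fun t ω => arNoise Φ (fun k => X k ω) t,
    fun t => (continuous_arNoise Φ t).measurable.comp (measurable_pi_lambda _ hmX),
    ⟨fun ω => arNoise_zero Φ _, hX.hasStationaryIncrements_arNoise hmX Φ, X 0, hpartial⟩,
    fun t ω => ?_⟩, hlim⟩
  rw [arNoise_sub_arNoise_sub_one, sub_mulVec, one_mulVec]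
  abel
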